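/- For k ≥ 1 and |A| ≥ 4, the lattice RC(A^k) of right congruences on A^k is not modular. Specifically, for distinct a,b,c,d ∈ A, the five relations λ (identity), σ = λ ∪ {a^k, ba^{k-1}}², σ' = σ ∪ {ca^{k-1}, da^{k-1}}², τ = λ ∪ {a^k, da^{k-1}}² ∪ {ba^{k-1}, ca^{k-1}}², ρ = λ ∪ {a^k, ba^{k-1}, ca^{k-1}, da^{k-1}}² are right congruences forming a pentagon sublattice (λ ⊂ σ ⊂ σ' ⊂ ρ, λ ⊂ τ ⊂ ρ, σ' ∩ τ = λ, σ ∨ τ = ρ). -/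

import Mathlib

/-- Words of length `k` over `A`. -/
abbrev Word (A : Type*) (k : ℕ) := {w : List A // w.length = k}

/-- The shift action of a letter: `u.a` is the suffix of length `k` of `u a`. -/
def act {A : Type*} (k : ℕ) (a : A) (u : Word A k) : Word A k :=
  ⟨(u.val ++ [a]).drop ((u.val ++ [a]).length - k), by
    have h := u.2
    simp only [List.length_drop, List.length_append, List.length_cons,
      List.length_nil, h]
    omega⟩

/-- A right congruence on `A^k`. -/
def IsRC {A : Type*} (k : ℕ) (r : Word A k → Word A k → Prop) : Prop :=
  Equivalence r ∧ ∀ u v : Word A k, r u v → ∀ a : A, r (act k a u) (act k a v)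

/-- Containment of relations. -/
def Rle {A : Type*} {k : ℕ} (r r' : Word A k → Word A k → Prop) : Prop :=
  ∀ u v : Word A k, r u v → r' u v

/-- The join of two right congruences in `RC(A^k)`. -/
def RCjoin {A : Type*} (k : ℕ) (σ τ : Word A k → Word A k → Prop)
    (u v : Word A k) : Prop :=
  ∀ μ : Word A k → Word A k → Prop, IsRC k μ → Rle σ μ → Rle τ μ → μ u v

/-!
All four words `a^k, ba^{k-1}, ca^{k-1}, da^{k-1}` have the same tail `a^{k-1}`, so appending any
letter and dropping the first one sends them to the same word. Hence every equivalence relation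
whose only nontrivial classes lie inside this four-element set is a right congruence, and the
question becomes one about partitions of a four-element set `{a, b, c, d}`: the partitions
`ab`, `ab|cd`, `ad|bc` and `abcd` together with the discrete one form a pentagon.
-/

section BlockRel

variable {α : Type*}

def blockRel (S : Set α) (x y : α) : Prop := x = y ∨ (x ∈ S ∧ y ∈ S)

lemma blockRel_of_mem {S : Set α} {x y : α} (hx : x ∈ S) (hy : y ∈ S) : blockRel S x y :=
  Or.inr ⟨hx, hy⟩

lemma eq_le_blockRel {S : Set α} : Eq ≤ blockRel S := fun _ _ => Or.inl

lemma blockRel_eq_of_notMem {S : Set α} {x y : α} (h : blockRel S x y) (hx : x ∉ S) : x = y :=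
  h.resolve_right fun h => hx h.1

lemma equivalence_blockRel (S : Set α) : Equivalence (blockRel S) where
  refl _ := Or.inl rfl
  symm := by
    rintro x y (rfl | ⟨hx, hy⟩)
    exacts [Or.inl rfl, blockRel_of_mem hy hx]
  trans := by
    rintro x y z (rfl | ⟨hx, hy⟩) hyz
    · exact hyz
    · rcases hyz with rfl | ⟨-, hz⟩
      exacts [blockRel_of_mem hx hy, blockRel_of_mem hx hz]

lemma equivalence_blockRel_sup {S T : Set α} (hST : Disjoint S T) :
    Equivalence (blockRel S ⊔ blockRel T) where
  refl x := Or.inl ((equivalence_blockRel S).refl x)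
  symm := by
    rintro x y (h | h)
    exacts [Or.inl ((equivalence_blockRel S).symm h), Or.inr ((equivalence_blockRel T).symm h)]
  trans := by
    rintro x y z (hxy | hxy) (hyz | hyz)
    · exact Or.inl ((equivalence_blockRel S).trans hxy hyz)
    · by_cases hy : y ∈ T
      · rw [← blockRel_eq_of_notMem ((equivalence_blockRel S).symm hxy)
          (Set.disjoint_right.1 hST hy)]
        exact Or.inr hyz
      · rw [← blockRel_eq_of_notMem hyz hy]
        exact Or.inl hxy
    · by_cases hy : y ∈ S
      · rw [← blockRel_eq_of_notMem ((equivalence_blockRel T).symm hxy)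
          (Set.disjoint_left.1 hST hy)]
        exact Or.inl hyz
      · rw [← blockRel_eq_of_notMem hyz hy]
        exact Or.inr hxy
    · exact Or.inr ((equivalence_blockRel T).trans hxy hyz)

lemma blockRel_mono : Monotone (blockRel (α := α)) := by
  rintro S T hST x y (rfl | ⟨hx, hy⟩)
  exacts [Or.inl rfl, blockRel_of_mem (hST hx) (hST hy)]

lemma blockRel_le {S : Set α} {μ : α → α → Prop} (hμ : ∀ x, μ x x)
    (h : ∀ x ∈ S, ∀ y ∈ S, μ x y) : blockRel S ≤ μ := by
  rintro x y (rfl | ⟨hx, hy⟩)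
  exacts [hμ x, h x hx y hy]

lemma lt_of_le_of_rel {r s : α → α → Prop} (hle : r ≤ s) {x y : α} (hs : s x y) (hr : ¬ r x y) :
    r < s :=
  lt_of_le_not_ge hle fun h => hr (h x y hs)

variable {a b c d : α}

lemma blockRel_pentagon_lt (hab : a ≠ b) (hac : a ≠ c) (had : a ≠ d) (hbc : b ≠ c)
    (hbd : b ≠ d) (hcd : c ≠ d) :
    (Eq < blockRel {a, b}) ∧ blockRel {a, b} < blockRel {a, b} ⊔ blockRel {c, d} ∧
    blockRel {a, b} ⊔ blockRel {c, d} < blockRel {a, b, c, d} ∧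
    (Eq < blockRel {a, d} ⊔ blockRel {b, c}) ∧
    blockRel {a, d} ⊔ blockRel {b, c} < blockRel {a, b, c, d} := by
  refine ⟨lt_of_le_of_rel (x := a) (y := b) eq_le_blockRel ?_ ?_,
    lt_of_le_of_rel (x := c) (y := d) le_sup_left ?_ ?_,
    lt_of_le_of_rel (x := a) (y := c) (sup_le (blockRel_mono ?_) (blockRel_mono ?_)) ?_ ?_,
    lt_of_le_of_rel (x := a) (y := d) (eq_le_blockRel.trans le_sup_left) ?_ ?_,
    lt_of_le_of_rel (x := a) (y := b) (sup_le (blockRel_mono ?_) (blockRel_mono ?_)) ?_ ?_⟩ <;>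
  simp [blockRel, Set.insert_subset_iff, hab, hac, had, hbc, hbd, hcd, hab.symm, hac.symm,
    had.symm, hbc.symm, hbd.symm, hcd.symm]

lemma blockRel_sup_inf_blockRel_sup_le_eq (hac : a ≠ c) (hbd : b ≠ d) :
    (blockRel {a, b} ⊔ blockRel {c, d}) ⊓ (blockRel {a, d} ⊔ blockRel {b, c}) ≤ Eq := by
  rintro x y ⟨h₁, h₂⟩
  simp only [Pi.sup_apply, blockRel, Set.mem_insert_iff, Set.mem_singleton_iff] at h₁ h₂
  aesop

lemma blockRel_quadruple_le {μ : α → α → Prop} (hμ : Equivalence μ) (hσ : blockRel {a, b} ≤ μ)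
    (hτ : blockRel {a, d} ⊔ blockRel {b, c} ≤ μ) : blockRel {a, b, c, d} ≤ μ := by
  have hab : μ a b := hσ a b (blockRel_of_mem (by simp) (by simp))
  have had : μ a d := hτ a d (Or.inl (blockRel_of_mem (by simp) (by simp)))
  have hbc : μ b c := hτ b c (Or.inr (blockRel_of_mem (by simp) (by simp)))
  have ha : ∀ x ∈ ({a, b, c, d} : Set α), μ a x := by
    rintro x (h | h | h | h) <;> rw [h]
    exacts [hμ.refl a, hab, hμ.trans hab hbc, had]
  exact blockRel_le hμ.refl fun x hx y hy => hμ.trans (hμ.symm (ha x hx)) (ha y hy)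

end BlockRel

section Words

variable {A : Type*} {k : ℕ}

lemma act_val (hk : 1 ≤ k) (e : A) (u : Word A k) : (act k e u).val = u.val.tail ++ [e] := by
  have hlen : (u.val ++ [e]).length - k = 1 := by simp [u.2]
  have hne : u.val ≠ [] := List.ne_nil_of_length_pos (by rw [u.2]; omega)
  simp only [act, hlen, List.drop_one, List.tail_append_of_ne_nil hne]

lemma isRC_of_tail_eq (hk : 1 ≤ k) {r : Word A k → Word A k → Prop} (hr : Equivalence r)
    (h : ∀ u v, r u v → u.val.tail = v.val.tail) : IsRC k r := by
  refine ⟨hr, fun u v huv e => ?_⟩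
  have : act k e u = act k e v := Subtype.ext (by rw [act_val hk, act_val hk, h u v huv])
  exact this ▸ hr.refl _

lemma isRC_of_le_blockRel (hk : 1 ≤ k) {W : Set (Word A k)} {t : List A}
    (hW : ∀ u ∈ W, u.val.tail = t) {r : Word A k → Word A k → Prop}
    (hr : Equivalence r) (hle : r ≤ blockRel W) : IsRC k r := by
  refine isRC_of_tail_eq hk hr fun u v huv => ?_
  rcases hle u v huv with rfl | ⟨hu, hv⟩
  exacts [rfl, (hW u hu).trans (hW v hv).symm]

lemma RCjoin_iff {σ τ ρ : Word A k → Word A k → Prop} (hρ : IsRC k ρ) (hσ : σ ≤ ρ) (hτ : τ ≤ ρ)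
    (hmin : ∀ μ, Equivalence μ → σ ≤ μ → τ ≤ μ → ρ ≤ μ) (u v : Word A k) :
    RCjoin k σ τ u v ↔ ρ u v :=
  ⟨fun h => h ρ hρ hσ hτ, fun h μ hμ hσμ hτμ => hmin μ hμ.1 hσμ hτμ u v h⟩

theorem RC_pentagon_of_tail_eq (hk : 1 ≤ k) {a b c d : Word A k} (hab : a ≠ b) (hac : a ≠ c)
    (had : a ≠ d) (hbc : b ≠ c) (hbd : b ≠ d) (hcd : c ≠ d) {t : List A}
    (ht : ∀ u ∈ ({a, b, c, d} : Set (Word A k)), u.val.tail = t) :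
    let σ := blockRel {a, b}
    let σ' := blockRel {a, b} ⊔ blockRel {c, d}
    let τ := blockRel {a, d} ⊔ blockRel {b, c}
    let ρ := blockRel {a, b, c, d}
    IsRC k (@Eq (Word A k)) ∧ IsRC k σ ∧ IsRC k σ' ∧ IsRC k τ ∧ IsRC k ρ ∧
    (@Eq (Word A k) ≤ σ ∧ ¬ σ ≤ Eq) ∧ (σ ≤ σ' ∧ ¬ σ' ≤ σ) ∧ (σ' ≤ ρ ∧ ¬ ρ ≤ σ') ∧
    (Eq ≤ τ ∧ ¬ τ ≤ Eq) ∧ (τ ≤ ρ ∧ ¬ ρ ≤ τ) ∧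
    (∀ u v, (σ' u v ∧ τ u v) ↔ u = v) ∧ (∀ u v, RCjoin k σ τ u v ↔ ρ u v) := by
  intro σ σ' τ ρ
  have hRC : ∀ r, Equivalence r → r ≤ ρ → IsRC k r := fun r hr hle =>
    isRC_of_le_blockRel hk ht hr hle
  obtain ⟨hlσ, hσσ', hσ'ρ, hlτ, hτρ⟩ := blockRel_pentagon_lt hab hac had hbc hbd hcd
  have hρ := hRC _ (equivalence_blockRel _) le_rfl
  refine ⟨hRC _ eq_equivalence eq_le_blockRel,
    hRC _ (equivalence_blockRel _) (hσσ'.le.trans hσ'ρ.le),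
    hRC _ (equivalence_blockRel_sup ?_) hσ'ρ.le, hRC _ (equivalence_blockRel_sup ?_) hτρ.le, hρ,
    lt_iff_le_not_ge.1 hlσ, lt_iff_le_not_ge.1 hσσ', lt_iff_le_not_ge.1 hσ'ρ,
    lt_iff_le_not_ge.1 hlτ, lt_iff_le_not_ge.1 hτρ,
    fun u v => ⟨blockRel_sup_inf_blockRel_sup_le_eq hac hbd u v, ?_⟩,
    RCjoin_iff hρ (hσσ'.le.trans hσ'ρ.le) hτρ.le fun μ hμ => blockRel_quadruple_le hμ⟩
  · simp [hac.symm, had.symm, hbc.symm, hbd.symm]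
  · simp [hab.symm, hac.symm, hbd, hcd]
  · rintro rfl
    exact ⟨Or.inl (Or.inl rfl), Or.inl (Or.inl rfl)⟩

end Words

theorem RC_not_modular_general {A : Type*}
    (k : ℕ) (hk : 1 ≤ k) :
    ∀ a b c d : A, a ≠ b → a ≠ c → a ≠ d → b ≠ c → b ≠ d → c ≠ d →
    let ak : List A := List.replicate k a
    let bak : List A := b :: List.replicate (k-1) a
    let cak : List A := c :: List.replicate (k-1) a
    let dak : List A := d :: List.replicate (k-1) a
    let lam : Word A k → Word A k → Prop := fun u v => u = v
    let σ : Word A k → Word A k → Prop := fun u v =>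
      u = v ∨ (u.val ∈ ({ak, bak} : Set (List A)) ∧ v.val ∈ ({ak, bak} : Set (List A)))
    let σ' : Word A k → Word A k → Prop := fun u v =>
      σ u v ∨ (u.val ∈ ({cak, dak} : Set (List A)) ∧ v.val ∈ ({cak, dak} : Set (List A)))
    let τ : Word A k → Word A k → Prop := fun u v =>
      u = v ∨ (u.val ∈ ({ak, dak} : Set (List A)) ∧ v.val ∈ ({ak, dak} : Set (List A)))
        ∨ (u.val ∈ ({bak, cak} : Set (List A)) ∧ v.val ∈ ({bak, cak} : Set (List A)))
    let ρ : Word A k → Word A k → Prop := fun u v =>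
      u = v ∨ (u.val ∈ ({ak, bak, cak, dak} : Set (List A)) ∧
        v.val ∈ ({ak, bak, cak, dak} : Set (List A)))
    IsRC k lam ∧ IsRC k σ ∧ IsRC k σ' ∧ IsRC k τ ∧ IsRC k ρ ∧
    (Rle lam σ ∧ ¬ Rle σ lam) ∧ (Rle σ σ' ∧ ¬ Rle σ' σ) ∧ (Rle σ' ρ ∧ ¬ Rle ρ σ') ∧
    (Rle lam τ ∧ ¬ Rle τ lam) ∧ (Rle τ ρ ∧ ¬ Rle ρ τ) ∧
    (∀ u v : Word A k, (σ' u v ∧ τ u v) ↔ lam u v) ∧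
    (∀ u v : Word A k, RCjoin k σ τ u v ↔ ρ u v) := by
  intro a b c d hab hac had hbc hbd hcd ak bak cak dak lam σ σ' τ ρ
  let w (x : A) : Word A k := ⟨x :: List.replicate (k - 1) a, by simp; omega⟩
  have hw : Function.Injective w := fun x y h => List.head_eq_of_cons_eq (congrArg Subtype.val h)
  have hwords : ak = (w a).val ∧ bak = (w b).val ∧ cak = (w c).val ∧ dak = (w d).val :=
    ⟨by simp only [ak, w]; rw [← List.replicate_succ, Nat.sub_add_cancel hk], rfl, rfl, rfl⟩
  have hσ : σ = blockRel {w a, w b} := by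
    funext u v
    simp only [σ, blockRel, Set.mem_insert_iff, Set.mem_singleton_iff, hwords, ← Subtype.ext_iff]
  have hσ' : σ' = blockRel {w a, w b} ⊔ blockRel {w c, w d} := by
    ext u v
    change _ ↔ (_ ∨ _)
    simp only [σ', hσ, blockRel, Set.mem_insert_iff, Set.mem_singleton_iff, hwords,
      ← Subtype.ext_iff]
    tauto
  have hτ : τ = blockRel {w a, w d} ⊔ blockRel {w b, w c} := by
    ext u v
    change _ ↔ (_ ∨ _)
    simp only [τ, blockRel, Set.mem_insert_iff, Set.mem_singleton_iff, hwords, ← Subtype.ext_iff]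
    tauto
  have hρ : ρ = blockRel {w a, w b, w c, w d} := by
    funext u v
    simp only [ρ, blockRel, Set.mem_insert_iff, Set.mem_singleton_iff, hwords, ← Subtype.ext_iff]
  clear_value σ σ' τ ρ
  subst hσ hσ' hτ hρ
  exact RC_pentagon_of_tail_eq hk (hw.ne hab) (hw.ne hac) (hw.ne had) (hw.ne hbc) (hw.ne hbd)
    (hw.ne hcd) (t := List.replicate (k - 1) a) (by rintro u (rfl | rfl | rfl | rfl) <;> rfl)

/-- for `k ≥ 1` and `|A| ≥ 4`, `RC(A^k)` is not modular: for distinct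
`a,b,c,d ∈ A` the relations `λ ⊂ σ ⊂ σ' ⊂ ρ`, `λ ⊂ τ ⊂ ρ` with `σ' ∩ τ = λ` and
`σ ∨ τ = ρ` are right congruences forming a pentagon sublattice. -/
theorem RC_not_modular {A : Type*} [Fintype A] (hA : 4 ≤ Fintype.card A)
    (k : ℕ) (hk : 1 ≤ k) :
    ∀ a b c d : A, a ≠ b → a ≠ c → a ≠ d → b ≠ c → b ≠ d → c ≠ d →
    let ak : List A := List.replicate k a
    let bak : List A := b :: List.replicate (k-1) a
    let cak : List A := c :: List.replicate (k-1) a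
    let dak : List A := d :: List.replicate (k-1) a
    let lam : Word A k → Word A k → Prop := fun u v => u = v
    let σ : Word A k → Word A k → Prop := fun u v =>
      u = v ∨ (u.val ∈ ({ak, bak} : Set (List A)) ∧ v.val ∈ ({ak, bak} : Set (List A)))
    let σ' : Word A k → Word A k → Prop := fun u v =>
      σ u v ∨ (u.val ∈ ({cak, dak} : Set (List A)) ∧ v.val ∈ ({cak, dak} : Set (List A)))
    let τ : Word A k → Word A k → Prop := fun u v =>
      u = v ∨ (u.val ∈ ({ak, dak} : Set (List A)) ∧ v.val ∈ ({ak, dak} : Set (List A)))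
        ∨ (u.val ∈ ({bak, cak} : Set (List A)) ∧ v.val ∈ ({bak, cak} : Set (List A)))
    let ρ : Word A k → Word A k → Prop := fun u v =>
      u = v ∨ (u.val ∈ ({ak, bak, cak, dak} : Set (List A)) ∧
        v.val ∈ ({ak, bak, cak, dak} : Set (List A)))
    IsRC k lam ∧ IsRC k σ ∧ IsRC k σ' ∧ IsRC k τ ∧ IsRC k ρ ∧
    (Rle lam σ ∧ ¬ Rle σ lam) ∧ (Rle σ σ' ∧ ¬ Rle σ' σ) ∧ (Rle σ' ρ ∧ ¬ Rle ρ σ') ∧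
    (Rle lam τ ∧ ¬ Rle τ lam) ∧ (Rle τ ρ ∧ ¬ Rle ρ τ) ∧
    (∀ u v : Word A k, (σ' u v ∧ τ u v) ↔ lam u v) ∧
    (∀ u v : Word A k, RCjoin k σ τ u v ↔ ρ u v) :=
  RC_not_modular_general k hk
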